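/- Let V ⊆ 𝒜 and let M=(S,R,L,s_0) and M'=(S',R',L',s_0') be initial structures. Then (M',s_0') ⊨ F_V(M,s_0) if and only if (M,s_0) ↔_{𝒜∖V} (M',s_0'), where F_V(M,s_0) is the characterizing formula of the initial K-structure (M,s_0) on V. -/

import Mathlib

universe u

/-- A Kripke structure over a set of atoms: a finite nonempty set of states,
a serial transition relation, and a labeling function. -/
structure Kripke (Atom : Type u) where
  State : Type u
  stateFinite : Finite State
  stateNonempty : Nonempty State
  R : State → State → Prop
  serial : ∀ s, ∃ t, R s t
  L : State → Set Atom

instance {Atom : Type u} (M : Kripke Atom) : Finite M.State := M.stateFinite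

/-- A K-structure: a Kripke structure together with one of its states. -/
structure KStruct (Atom : Type u) where
  M : Kripke Atom
  s : M.State

/-- An initial structure: a Kripke structure with an initial state `s0`,
i.e. a state admitting a path visiting every state. -/
structure InitKripke (Atom : Type u) extends Kripke Atom where
  s0 : State
  initial : ∃ π : ℕ → State, π 0 = s0 ∧ (∀ n, R (π n) (π (n + 1))) ∧ ∀ t, ∃ n, π n = t

/-- The (initial) K-structure associated to an initial structure. -/
def InitKripke.toKS {Atom : Type u} (M : InitKripke Atom) : KStruct Atom :=
  ⟨M.toKripke, M.s0⟩

/-- The approximations `B_n^V` of `V`-bisimilarity on K-structures. -/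
def BRel {Atom : Type u} (V : Set Atom) : ℕ → KStruct Atom → KStruct Atom → Prop
  | 0 => fun K1 K2 => K1.M.L K1.s \ V = K2.M.L K2.s \ V
  | n + 1 => fun K1 K2 =>
      K1.M.L K1.s \ V = K2.M.L K2.s \ V ∧
      (∀ t1, K1.M.R K1.s t1 → ∃ t2, K2.M.R K2.s t2 ∧ BRel V n ⟨K1.M, t1⟩ ⟨K2.M, t2⟩) ∧
      (∀ t2, K2.M.R K2.s t2 → ∃ t1, K1.M.R K1.s t1 ∧ BRel V n ⟨K1.M, t1⟩ ⟨K2.M, t2⟩)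

/-- `V`-bisimilarity `K1 ↔_V K2` of K-structures. -/
def VBisim {Atom : Type u} (V : Set Atom) (K1 K2 : KStruct Atom) : Prop :=
  ∀ n, BRel V n K1 K2

/-- CTL formulas in existential normal form. -/
inductive CTL (Atom : Type u) : Type u
  | bot  : CTL Atom
  | top  : CTL Atom
  | atom (p : Atom) : CTL Atom
  | neg  (φ : CTL Atom) : CTL Atom
  | or   (φ ψ : CTL Atom) : CTL Atom
  | EX   (φ : CTL Atom) : CTL Atom
  | EG   (φ : CTL Atom) : CTL Atom
  | EU   (φ ψ : CTL Atom) : CTL Atom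

namespace CTL
variable {Atom : Type u}

def and (φ ψ : CTL Atom) : CTL Atom := .neg (.or (.neg φ) (.neg ψ))
def imp (φ ψ : CTL Atom) : CTL Atom := .or (.neg φ) ψ
def iff (φ ψ : CTL Atom) : CTL Atom := (φ.imp ψ).and (ψ.imp φ)
def AX (φ : CTL Atom) : CTL Atom := .neg (.EX (.neg φ))
def EF (φ : CTL Atom) : CTL Atom := .EU .top φ
def AF (φ : CTL Atom) : CTL Atom := .neg (.EG (.neg φ))
def AG (φ : CTL Atom) : CTL Atom := .neg (.EU .top (.neg φ))

/-- The set of atoms occurring in a formula. -/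
def vars : CTL Atom → Set Atom
  | .bot => ∅
  | .top => ∅
  | .atom p => {p}
  | .neg φ => vars φ
  | .or φ ψ => vars φ ∪ vars ψ
  | .EX φ => vars φ
  | .EG φ => vars φ
  | .EU φ ψ => vars φ ∪ vars ψ

end CTL

/-- The standard CTL satisfaction relation `(M,s) ⊨ φ`. -/
def Sat {Atom : Type u} (M : Kripke Atom) : CTL Atom → M.State → Prop
  | .bot => fun _ => False
  | .top => fun _ => True
  | .atom p => fun s => p ∈ M.L s
  | .neg φ => fun s => ¬ Sat M φ s
  | .or φ ψ => fun s => Sat M φ s ∨ Sat M ψ s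
  | .EX φ => fun s => ∃ t, M.R s t ∧ Sat M φ t
  | .EG φ => fun s => ∃ π : ℕ → M.State, π 0 = s ∧ (∀ n, M.R (π n) (π (n + 1))) ∧
      ∀ n, Sat M φ (π n)
  | .EU φ ψ => fun s => ∃ π : ℕ → M.State, π 0 = s ∧ (∀ n, M.R (π n) (π (n + 1))) ∧
      ∃ i, Sat M ψ (π i) ∧ ∀ j < i, Sat M φ (π j)

/-- Satisfaction for K-structures. -/
def KSat {Atom : Type u} (K : KStruct Atom) (φ : CTL Atom) : Prop := Sat K.M φ K.s

/-- The set of models (initial K-structures) of a formula. -/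
def CTLMod {Atom : Type u} (φ : CTL Atom) : Set (InitKripke Atom) :=
  {M | Sat M.toKripke φ M.s0}

def Entails {Atom : Type u} (φ ψ : CTL Atom) : Prop := CTLMod φ ⊆ CTLMod ψ

def CTLEquiv {Atom : Type u} (φ ψ : CTL Atom) : Prop := CTLMod φ = CTLMod ψ

/-- `IR φ V`: φ is irrelevant to the atoms in V. -/
def IR {Atom : Type u} (φ : CTL Atom) (V : Set Atom) : Prop :=
  ∃ ψ : CTL Atom, CTL.vars ψ ∩ V = ∅ ∧ CTLEquiv φ ψ

/-- `V`-bisimilarity of depth-`n` computation trees rooted at `s1` (in `M1`) and `s2` (in `M2`). -/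
def TreeBisim {Atom : Type u} (V : Set Atom) (M1 M2 : Kripke Atom) :
    ℕ → M1.State → M2.State → Prop
  | 0 => fun s1 s2 => M1.L s1 \ V = M2.L s2 \ V
  | n + 1 => fun s1 s2 =>
      M1.L s1 \ V = M2.L s2 \ V ∧
      (∀ t1, M1.R s1 t1 → ∃ t2, M2.R s2 t2 ∧ TreeBisim V M1 M2 n t1 t2) ∧
      (∀ t2, M2.R s2 t2 → ∃ t1, M1.R s1 t1 ∧ TreeBisim V M1 M2 n t1 t2)

/-- Finite conjunction of a list of formulas. -/
def andList {Atom : Type u} : List (CTL Atom) → CTL Atom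
  | [] => .top
  | φ :: l => φ.and (andList l)

/-- Finite disjunction of a list of formulas. -/
def orList {Atom : Type u} : List (CTL Atom) → CTL Atom
  | [] => .bot
  | φ :: l => .or φ (orList l)

/-- A list enumerating a subset of a finite type. -/
noncomputable def setToList {α : Type u} [Finite α] (s : Set α) : List α :=
  s.toFinite.toFinset.toList

/-- The list of `R`-successors of a state. -/
noncomputable def Kripke.succList {Atom : Type u} (M : Kripke Atom) (s : M.State) :
    List M.State :=
  setToList {t | M.R s t}

/-- The characterizing formula `F_V(Tr_0(s))` of the depth-0 computation tree. -/
noncomputable def charTree0 {Atom : Type u} [Finite Atom] (M : Kripke Atom) (V : Set Atom)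
    (s : M.State) : CTL Atom :=
  (andList ((setToList (V ∩ M.L s)).map CTL.atom)).and
    (andList ((setToList (V \ M.L s)).map fun q => CTL.neg (CTL.atom q)))

/-- The characterizing formula `F_V(Tr_n(s))` of the depth-`n` computation tree of `s`. -/
noncomputable def charTree {Atom : Type u} [Finite Atom] (M : Kripke Atom) (V : Set Atom) :
    ℕ → M.State → CTL Atom
  | 0 => fun s => charTree0 M V s
  | k + 1 => fun s =>
      (andList ((M.succList s).map fun t => CTL.EX (charTree M V k t))).and
        ((CTL.AX (orList ((M.succList s).map (charTree M V k)))).and (charTree0 M V s))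

/-- `dis_V(M,s,s',k)`: `s` and `s'` are `V`-distinguishable, and `k` is the least depth at which
their computation trees fail to be `(𝒜∖V)`-bisimilar. -/
def dis {Atom : Type u} (M : Kripke Atom) (V : Set Atom) (s s' : M.State) (k : ℕ) : Prop :=
  ¬ VBisim Vᶜ ⟨M, s⟩ ⟨M, s'⟩ ∧
  IsLeast {n | ¬ TreeBisim Vᶜ M M n s s'} k

/-- The characterization number `ch(M,V)`. -/
noncomputable def ch {Atom : Type u} (M : Kripke Atom) (V : Set Atom) : ℕ :=
  letI := Classical.dec (∃ s s' k, dis M V s s' k)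
  if ∃ s s' k, dis M V s s' k then
    sSup {k | ∃ s s', dis M V s s' k}
  else
    sInf {k | (fun s s' : M.State => BRel Vᶜ k ⟨M, s⟩ ⟨M, s'⟩) =
              (fun s s' : M.State => BRel Vᶜ (k + 1) ⟨M, s⟩ ⟨M, s'⟩)}

/-- The characterizing formula `F_V(M,s0)` of an initial K-structure on `V`. -/
noncomputable def charForm {Atom : Type u} [Finite Atom] (M : InitKripke Atom) (V : Set Atom) :
    CTL Atom :=
  let T : M.State → CTL Atom := fun s => charTree M.toKripke V (ch M.toKripke V) s
  (T M.s0).and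
    (andList ((setToList (Set.univ : Set M.State)).map fun s =>
      CTL.AG ((T s).imp
        ((andList ((M.toKripke.succList s).map fun t => CTL.EX (T t))).and
          (CTL.AX (orList ((M.toKripke.succList s).map T)))))))

/-- `ψ` is a result of forgetting `V` from `φ`. -/
def IsForget {Atom : Type u} (φ : CTL Atom) (V : Set Atom) (ψ : CTL Atom) : Prop :=
  CTL.vars ψ ∩ V = ∅ ∧
  CTLMod ψ = {K : InitKripke Atom | ∃ K' ∈ CTLMod φ, VBisim V K'.toKS K.toKS}

/-!
Write `T s` for the depth-`c` tree formula of `s`, `c = ch(M,V)`. A state `t'` satisfies `T s`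
exactly when the depth-`c` computation trees of `s` and `t'` are bisimilar off `V`, and the
`AG`-conjuncts of `F_V(M,s₀)` say that at every reachable `t'` such depth-`c` agreement with `s`
lifts to depth `c + 1`. Hence the pairs `(s, t')` with `t'` reachable and `t' ⊨ T s` form a
bisimulation, which gives `s₀ ↔ s₀'`. Conversely, if `s₀ ↔ s₀'` then each reachable `t'` is
bisimilar to some `u ∈ S`; depth-`c` agreement of `s` with `t'` then transfers to `s` and `u`
inside `M`, and by the choice of `ch(M,V)` this already forces `s ↔ u`, hence `s ↔ t'`.
-/

section

variable {Atom : Type u}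

section Satisfaction

variable {M : Kripke Atom}

theorem sat_and {φ ψ : CTL Atom} {s : M.State} :
    Sat M (φ.and ψ) s ↔ Sat M φ s ∧ Sat M ψ s := by
  simp only [CTL.and, Sat]; tauto

theorem sat_imp {φ ψ : CTL Atom} {s : M.State} :
    Sat M (φ.imp ψ) s ↔ (Sat M φ s → Sat M ψ s) := by
  simp only [CTL.imp, Sat]; tauto

theorem sat_AX {φ : CTL Atom} {s : M.State} :
    Sat M (CTL.AX φ) s ↔ ∀ t, M.R s t → Sat M φ t := by
  simp only [CTL.AX, Sat, not_exists, not_and, not_not]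

theorem sat_andList {l : List (CTL Atom)} {s : M.State} :
    Sat M (andList l) s ↔ ∀ φ ∈ l, Sat M φ s := by
  induction l with
  | nil => simp [andList, Sat]
  | cons φ l ih => simp [andList, sat_and, ih]

theorem sat_orList {l : List (CTL Atom)} {s : M.State} :
    Sat M (orList l) s ↔ ∃ φ ∈ l, Sat M φ s := by
  induction l with
  | nil => simp [orList, Sat]
  | cons φ l ih => simp [orList, Sat, ih]

theorem mem_setToList {α : Type u} [Finite α] {s : Set α} {a : α} :
    a ∈ setToList s ↔ a ∈ s := by
  simp [setToList]

theorem mem_succList {s t : M.State} : t ∈ M.succList s ↔ M.R s t :=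
  mem_setToList

theorem Kripke.reflTransGen_of_path {π : ℕ → M.State}
    (hπ : ∀ n, M.R (π n) (π (n + 1))) (n : ℕ) : Relation.ReflTransGen M.R (π 0) (π n) := by
  induction n with
  | zero => rfl
  | succ n ih => exact ih.tail (hπ n)

theorem Kripke.exists_path_of_reflTransGen {s t : M.State}
    (h : Relation.ReflTransGen M.R s t) :
    ∃ π : ℕ → M.State, π 0 = s ∧ (∀ n, M.R (π n) (π (n + 1))) ∧
      ∃ i, π i = t := by
  induction h using Relation.ReflTransGen.head_induction_on with
  | refl =>
    choose next hnext using M.serial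
    refine ⟨fun n => next^[n] t, rfl, fun n => ?_, 0, rfl⟩
    simp only [Function.iterate_succ_apply']
    exact hnext _
  | @head a b hab _ ih =>
    obtain ⟨π, rfl, hπ, i, hi⟩ := ih
    refine ⟨fun | 0 => a | n + 1 => π n, rfl, ?_, i + 1, hi⟩
    rintro (_ | n)
    exacts [hab, hπ n]

theorem sat_EF {φ : CTL Atom} {s : M.State} :
    Sat M (CTL.EF φ) s ↔ ∃ t, Relation.ReflTransGen M.R s t ∧ Sat M φ t := by
  simp only [CTL.EF, Sat, and_true, implies_true]
  constructor
  · rintro ⟨π, rfl, hπ, i, hi⟩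
    exact ⟨π i, M.reflTransGen_of_path hπ i, hi⟩
  · rintro ⟨t, hst, ht⟩
    obtain ⟨π, rfl, hπ, i, rfl⟩ := M.exists_path_of_reflTransGen hst
    exact ⟨π, rfl, hπ, i, ht⟩

theorem sat_AG {φ : CTL Atom} {s : M.State} :
    Sat M (CTL.AG φ) s ↔ ∀ t, Relation.ReflTransGen M.R s t → Sat M φ t := by
  have := (sat_EF (φ := φ.neg) (s := s)).not
  simp only [Sat, not_exists, not_and, not_not] at this
  exact this

end Satisfaction

section Bisimulation

variable {V : Set Atom} {M₁ M₂ M₃ : Kripke Atom}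

theorem TreeBisim.label_eq {n : ℕ} {s : M₁.State} {t : M₂.State}
    (h : TreeBisim V M₁ M₂ n s t) : M₁.L s \ V = M₂.L t \ V := by
  cases n
  exacts [h, h.1]

theorem TreeBisim.of_succ :
    ∀ {n : ℕ} {s : M₁.State} {t : M₂.State},
      TreeBisim V M₁ M₂ (n + 1) s t → TreeBisim V M₁ M₂ n s t
  | 0, _, _, h => h.1
  | _ + 1, _, _, ⟨hL, hf, hb⟩ =>
    ⟨hL, fun s' hs' => (hf s' hs').imp fun _ => And.imp_right of_succ,
      fun t' ht' => (hb t' ht').imp fun _ => And.imp_right of_succ⟩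

theorem TreeBisim.mono {m n : ℕ} (hmn : m ≤ n) {s : M₁.State} {t : M₂.State}
    (h : TreeBisim V M₁ M₂ n s t) : TreeBisim V M₁ M₂ m s t := by
  induction hmn with
  | refl => exact h
  | step _ ih => exact ih h.of_succ

theorem TreeBisim.symm :
    ∀ {n : ℕ} {s : M₁.State} {t : M₂.State},
      TreeBisim V M₁ M₂ n s t → TreeBisim V M₂ M₁ n t s
  | 0, _, _, h => Eq.symm h
  | _ + 1, _, _, ⟨hL, hf, hb⟩ =>
    ⟨hL.symm, fun t' ht' => (hb t' ht').imp fun _ => And.imp_right symm,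
      fun s' hs' => (hf s' hs').imp fun _ => And.imp_right symm⟩

theorem TreeBisim.trans :
    ∀ {n : ℕ} {s : M₁.State} {t : M₂.State} {u : M₃.State},
      TreeBisim V M₁ M₂ n s t → TreeBisim V M₂ M₃ n t u → TreeBisim V M₁ M₃ n s u
  | 0, _, _, _, h₁, h₂ => Eq.trans h₁ h₂
  | _ + 1, _, _, _, ⟨hL₁, hf₁, hb₁⟩, ⟨hL₂, hf₂, hb₂⟩ => by
    refine ⟨hL₁.trans hL₂, fun s' hs' => ?_, fun u' hu' => ?_⟩
    · obtain ⟨t', ht', hst⟩ := hf₁ s' hs'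
      obtain ⟨u', hu', htu⟩ := hf₂ t' ht'
      exact ⟨u', hu', hst.trans htu⟩
    · obtain ⟨t', ht', htu⟩ := hb₂ u' hu'
      obtain ⟨s', hs', hst⟩ := hb₁ t' ht'
      exact ⟨s', hs', hst.trans htu⟩

theorem vbisim_iff_forall_treeBisim {s : M₁.State} {t : M₂.State} :
    VBisim V ⟨M₁, s⟩ ⟨M₂, t⟩ ↔ ∀ n, TreeBisim V M₁ M₂ n s t := by
  suffices ∀ n s t, BRel V n ⟨M₁, s⟩ ⟨M₂, t⟩ ↔ TreeBisim V M₁ M₂ n s t from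
    forall_congr' (this · s t)
  intro n
  induction n with
  | zero => exact fun _ _ => Iff.rfl
  | succ n ih => simp only [BRel, TreeBisim, ih, implies_true]

theorem VBisim.trans {s : M₁.State} {t : M₂.State} {u : M₃.State}
    (h₁ : VBisim V ⟨M₁, s⟩ ⟨M₂, t⟩) (h₂ : VBisim V ⟨M₂, t⟩ ⟨M₃, u⟩) :
    VBisim V ⟨M₁, s⟩ ⟨M₃, u⟩ :=
  vbisim_iff_forall_treeBisim.2 fun n =>
    (vbisim_iff_forall_treeBisim.1 h₁ n).trans (vbisim_iff_forall_treeBisim.1 h₂ n)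

theorem VBisim.exists_back {s : M₁.State} {t t' : M₂.State}
    (h : VBisim V ⟨M₁, s⟩ ⟨M₂, t⟩) (ht : M₂.R t t') :
    ∃ s', M₁.R s s' ∧ VBisim V ⟨M₁, s'⟩ ⟨M₂, t'⟩ := by
  simp only [vbisim_iff_forall_treeBisim] at h ⊢
  by_contra! hsep
  -- `M₁` is finite, so a single depth separates every successor of `s` from `t'`.
  have hN : ∀ᶠ n in Filter.atTop, ∀ s', M₁.R s s' → ¬ TreeBisim V M₁ M₂ n s' t' :=
    Filter.eventually_all.2 fun s' => Filter.eventually_imp_distrib_left.2 fun hs' =>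
      let ⟨n, hn⟩ := hsep s' hs'
      Filter.eventually_atTop.2 ⟨n, fun _ hm hb => hn (hb.mono hm)⟩
  obtain ⟨N, hN⟩ := hN.exists
  obtain ⟨s', hs', hb⟩ := (h (N + 1)).2.2 t' ht
  exact hN s' hs' hb

theorem VBisim.exists_of_reflTransGen {s : M₁.State} {t t' : M₂.State}
    (h : VBisim V ⟨M₁, s⟩ ⟨M₂, t⟩) (ht : Relation.ReflTransGen M₂.R t t') :
    ∃ s', VBisim V ⟨M₁, s'⟩ ⟨M₂, t'⟩ := by
  induction ht with
  | refl => exact ⟨s, h⟩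
  | tail _ hstep ih =>
    obtain ⟨u, hu⟩ := ih
    obtain ⟨u', -, hu'⟩ := hu.exists_back hstep
    exact ⟨u', hu'⟩

structure IsBisimulation (V : Set Atom) (Z : M₁.State → M₂.State → Prop) : Prop where
  label_eq : ∀ ⦃s t⦄, Z s t → M₁.L s \ V = M₂.L t \ V
  forth : ∀ ⦃s t⦄, Z s t → ∀ s', M₁.R s s' → ∃ t', M₂.R t t' ∧ Z s' t'
  back : ∀ ⦃s t⦄, Z s t → ∀ t', M₂.R t t' → ∃ s', M₁.R s s' ∧ Z s' t'

theorem IsBisimulation.treeBisim {Z : M₁.State → M₂.State → Prop}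
    (hZ : IsBisimulation V Z) :
    ∀ (n : ℕ) {s t}, Z s t → TreeBisim V M₁ M₂ n s t
  | 0, _, _, h => hZ.label_eq h
  | n + 1, _, _, h =>
    ⟨hZ.label_eq h, fun s' hs' => (hZ.forth h s' hs').imp fun _ => And.imp_right (hZ.treeBisim n),
      fun t' ht' => (hZ.back h t' ht').imp fun _ => And.imp_right (hZ.treeBisim n)⟩

theorem IsBisimulation.vbisim {Z : M₁.State → M₂.State → Prop} (hZ : IsBisimulation V Z)
    {s : M₁.State} {t : M₂.State} (h : Z s t) : VBisim V ⟨M₁, s⟩ ⟨M₂, t⟩ :=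
  vbisim_iff_forall_treeBisim.2 fun n => hZ.treeBisim n h

theorem vbisim_of_forall_reachable_treeBisim_succ {k : ℕ} {s₀ : M₁.State} {t₀ : M₂.State}
    (h₀ : TreeBisim V M₁ M₂ k s₀ t₀)
    (hstep : ∀ s t, Relation.ReflTransGen M₂.R t₀ t →
      TreeBisim V M₁ M₂ k s t → TreeBisim V M₁ M₂ (k + 1) s t) :
    VBisim V ⟨M₁, s₀⟩ ⟨M₂, t₀⟩ := by
  refine IsBisimulation.vbisim (Z := fun s t => Relation.ReflTransGen M₂.R t₀ t ∧
    TreeBisim V M₁ M₂ k s t) ⟨fun _ _ h => h.2.label_eq, ?_, ?_⟩ ⟨.refl, h₀⟩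
  · rintro s t ⟨hreach, hst⟩ s' hs'
    obtain ⟨t', ht', h'⟩ := (hstep s t hreach hst).2.1 s' hs'
    exact ⟨t', ht', hreach.tail ht', h'⟩
  · rintro s t ⟨hreach, hst⟩ t' ht'
    obtain ⟨s', hs', h'⟩ := (hstep s t hreach hst).2.2 t' ht'
    exact ⟨s', hs', hreach.tail ht', h'⟩

end Bisimulation

section CharacterizationNumber

variable {M : Kripke Atom} {V : Set Atom}

theorem exists_dis_of_not_vbisim {s s' : M.State} (h : ¬ VBisim Vᶜ ⟨M, s⟩ ⟨M, s'⟩) :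
    ∃ k, dis M V s s' k := by
  have hne : {n | ¬ TreeBisim Vᶜ M M n s s'}.Nonempty := by
    simpa [vbisim_iff_forall_treeBisim, Set.Nonempty] using h
  exact ⟨_, h, isLeast_csInf hne⟩

theorem bddAbove_dis : BddAbove {k | ∃ s s', dis M V s s' k} := by
  refine ((Set.finite_range fun p : M.State × M.State =>
    sInf {n | ¬ TreeBisim Vᶜ M M n p.1 p.2}).subset ?_).bddAbove
  rintro k ⟨s, s', -, hk⟩
  exact ⟨(s, s'), hk.csInf_eq⟩

theorem vbisim_of_treeBisim_ch {s u : M.State} (h : TreeBisim Vᶜ M M (ch M V) s u) :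
    VBisim Vᶜ ⟨M, s⟩ ⟨M, u⟩ := by
  by_contra hsu
  obtain ⟨k, hk⟩ := exists_dis_of_not_vbisim hsu
  have hkc : k ≤ ch M V := by
    rw [ch, if_pos ⟨s, u, k, hk⟩]
    exact le_csSup bddAbove_dis ⟨s, u, hk⟩
  exact hk.2.1 (h.mono hkc)

theorem treeBisim_ch_succ_of_reachable {M' : Kripke Atom} {s₀ s : M.State} {t₀ t : M'.State}
    (h₀ : VBisim Vᶜ ⟨M, s₀⟩ ⟨M', t₀⟩) (hreach : Relation.ReflTransGen M'.R t₀ t)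
    (hst : TreeBisim Vᶜ M M' (ch M V) s t) : TreeBisim Vᶜ M M' (ch M V + 1) s t := by
  obtain ⟨u, hut⟩ := h₀.exists_of_reflTransGen hreach
  have hsu : VBisim Vᶜ ⟨M, s⟩ ⟨M, u⟩ :=
    vbisim_of_treeBisim_ch (hst.trans (vbisim_iff_forall_treeBisim.1 hut _).symm)
  exact vbisim_iff_forall_treeBisim.1 (hsu.trans hut) _

end CharacterizationNumber

section CharacterizingFormula

variable [Finite Atom] {M M' : Kripke Atom} {V : Set Atom}

noncomputable def charStep (M : Kripke Atom) (V : Set Atom) (k : ℕ) (s : M.State) : CTL Atom :=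
  (andList ((M.succList s).map fun t => CTL.EX (charTree M V k t))).and
    (CTL.AX (orList ((M.succList s).map (charTree M V k))))

theorem sat_charStep {k : ℕ} {s : M.State} {t : M'.State} :
    Sat M' (charStep M V k s) t ↔
      (∀ s', M.R s s' → ∃ t', M'.R t t' ∧ Sat M' (charTree M V k s') t') ∧
      (∀ t', M'.R t t' → ∃ s', M.R s s' ∧ Sat M' (charTree M V k s') t') := by
  simp only [charStep, sat_and, sat_andList, sat_AX, sat_orList, List.mem_map,
    mem_succList]
  aesop

theorem sat_charTree0 {s : M.State} {t : M'.State} :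
    Sat M' (charTree0 M V s) t ↔ M.L s \ Vᶜ = M'.L t \ Vᶜ := by
  simp only [charTree0, sat_and, sat_andList, List.forall_mem_map, mem_setToList, Sat,
    Set.sdiff_compl, Set.ext_iff, Set.mem_inter_iff, Set.mem_sdiff]
  grind

theorem sat_charTree_succ {k : ℕ} {s : M.State} {t : M'.State} :
    Sat M' (charTree M V (k + 1) s) t ↔
      Sat M' (charStep M V k s) t ∧ Sat M' (charTree0 M V s) t := by
  simp only [charTree, charStep, sat_and]
  tauto

theorem sat_charTree {n : ℕ} {s : M.State} {t : M'.State} :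
    Sat M' (charTree M V n s) t ↔ TreeBisim Vᶜ M M' n s t := by
  induction n generalizing s t with
  | zero => exact sat_charTree0
  | succ k ih =>
    simp only [sat_charTree_succ, sat_charStep, sat_charTree0, ih, TreeBisim]
    tauto

theorem sat_charTree_imp_charStep {k : ℕ} {s : M.State} {t : M'.State} :
    Sat M' ((charTree M V k s).imp (charStep M V k s)) t ↔
      (TreeBisim Vᶜ M M' k s t → TreeBisim Vᶜ M M' (k + 1) s t) := by
  simp only [sat_imp, sat_charStep, sat_charTree, TreeBisim]
  exact imp_congr_right fun h => ⟨fun h' => ⟨h.label_eq, h'⟩, And.right⟩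

theorem sat_charForm {M : InitKripke Atom} {t : M'.State} :
    Sat M' (charForm M V) t ↔
      TreeBisim Vᶜ M.toKripke M' (ch M.toKripke V) M.s0 t ∧
      ∀ s t', Relation.ReflTransGen M'.R t t' →
        TreeBisim Vᶜ M.toKripke M' (ch M.toKripke V) s t' →
        TreeBisim Vᶜ M.toKripke M' (ch M.toKripke V + 1) s t' := by
  change Sat M' ((charTree M.toKripke V _ M.s0).and (andList ((setToList Set.univ).map fun s =>
    CTL.AG ((charTree M.toKripke V _ s).imp (charStep M.toKripke V _ s))))) t ↔ _
  simp only [sat_and, sat_andList, List.forall_mem_map, mem_setToList, Set.mem_univ,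
    true_implies, sat_AG, sat_charTree_imp_charStep, sat_charTree]

end CharacterizingFormula

end

/-- `(M',s_0') ⊨ F_V(M,s_0)` iff `(M,s_0) ↔_{𝒜∖V} (M',s_0')`. -/
theorem sat_charForm_iff_vbisim {Atom : Type u} [Finite Atom] (V : Set Atom)
    (M M' : InitKripke Atom) :
    Sat M'.toKripke (charForm M V) M'.s0 ↔ VBisim Vᶜ M.toKS M'.toKS := by
  rw [sat_charForm]
  constructor
  · rintro ⟨h₀, hstep⟩
    exact vbisim_of_forall_reachable_treeBisim_succ h₀ hstep
  · intro h
    exact ⟨vbisim_iff_forall_treeBisim.1 h _,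
      fun _ _ hreach hst => treeBisim_ch_succ_of_reachable h hreach hst⟩
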